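/- arXiv:2203.09395 — 2 statements merged into one kernel-verified Lean document; each statement's English description precedes it below -/
import Mathlib

section
/- Let Γ be a finite Abelian group such that the number of involutions of Γ is different from 1. Then there exist bijections φ, ψ : Γ → Γ such that g + φ(g) + ψ(g) = 0 for every g ∈ Γ, and moreover φ(0) = ψ(0) = 0. -/
open Function Finset



/-- A group has a complete mapping. -/
def HasCM (G : Type*) [AddCommGroup G] : Prop :=
  ∃ φ : G → G, Bijective φ ∧ Bijective (fun g => g + φ g)

lemma hasCM_of_subsingleton (G : Type*) [AddCommGroup G] [Subsingleton G] : HasCM G :=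
  ⟨id, bijective_id, ⟨fun _ _ _ => Subsingleton.elim _ _, fun g => ⟨g, Subsingleton.elim _ _⟩⟩⟩

lemma HasCM.congr {G H : Type*} [AddCommGroup G] [AddCommGroup H] (e : G ≃+ H)
    (hG : HasCM G) : HasCM H := by
  obtain ⟨φ, h1, h2⟩ := hG
  refine ⟨fun h => e (φ (e.symm h)), ?_, ?_⟩
  · exact e.bijective.comp (h1.comp e.symm.bijective)
  · have : (fun h : H => h + e (φ (e.symm h)))
        = (fun g : G => e (g + φ g)) ∘ (fun h => e.symm h) := by
      funext h; simp [map_add]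
    rw [this]
    exact (e.bijective.comp h2).comp e.symm.bijective

lemma HasCM.prod {G H : Type*} [AddCommGroup G] [AddCommGroup H]
    (hG : HasCM G) (hH : HasCM H) : HasCM (G × H) := by
  obtain ⟨φ, h1, h2⟩ := hG
  obtain ⟨ψ, k1, k2⟩ := hH
  refine ⟨fun p => (φ p.1, ψ p.2), ?_, ?_⟩
  · exact ⟨fun a b hab => by
      obtain ⟨h1', h2'⟩ := Prod.mk.injEq .. ▸ hab
      exact Prod.ext (h1.1 h1') (k1.1 h2'),
      fun p => by obtain ⟨a, ha⟩ := h1.2 p.1; obtain ⟨b, hb⟩ := k1.2 p.2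
                  exact ⟨(a, b), by simp [ha, hb]⟩⟩
  · constructor
    · intro a b hab
      obtain ⟨h1', h2'⟩ := Prod.mk.injEq .. ▸ hab
      exact Prod.ext (h2.1 h1') (k2.1 h2')
    · intro p
      obtain ⟨a, ha⟩ := h2.2 p.1; obtain ⟨b, hb⟩ := k2.2 p.2
      exact ⟨(a, b), by simpa [Prod.ext_iff] using ⟨ha, hb⟩⟩

lemma hasCM_of_odd {G : Type*} [AddCommGroup G] [Fintype G]
    (hodd : ¬ 2 ∣ Fintype.card G) : HasCM G := by
  refine ⟨id, bijective_id, ?_⟩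
  have hc : (Nat.card G).Coprime 2 := by
    rw [Nat.card_eq_fintype_card]
    rw [Nat.coprime_two_right, Nat.odd_iff, ← Nat.two_dvd_ne_zero]
    exact hodd
  have := hc.nsmul_right_bijective (G := G)
  have heq : (fun g : G => g + id g) = (fun g : G => 2 • g) := by
    funext g; simp [two_nsmul]
  rw [heq]
  exact this



lemma hasCM_extension {G H K : Type*} [AddCommGroup G] [AddCommGroup H] [AddCommGroup K]
    [Finite G] (f : G →+ H) (hf : Surjective f) (e : K →+ G) (he : Injective e)
    (hker : ∀ g, f g = 0 ↔ ∃ k, e k = g) (hH : HasCM H) (hK : HasCM K) : HasCM G := by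
  classical
  obtain ⟨π, hπ, hσH⟩ := hH
  obtain ⟨φK, hφK, hσK⟩ := hK
  set s : H → G := surjInv hf with hs
  have hfs : ∀ h, f (s h) = h := fun h => surjInv_eq hf h
  have hd : ∀ g : G, ∃ k : K, e k = g - s (f g) := by
    intro g
    rw [← hker]
    simp [map_sub, hfs]
  choose k hk using hd
  have hfe : ∀ x : K, f (e x) = 0 := fun x => (hker (e x)).mpr ⟨x, rfl⟩
  have hgdecomp : ∀ g : G, g = s (f g) + e (k g) := by
    intro g; rw [hk]; abel
  set φ : G → G := fun g => s (π (f g)) + e (φK (k g)) with hφ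
  have hfφ : ∀ g, f (φ g) = π (f g) := by
    intro g; simp [hφ, map_add, hfs, hfe]
  refine ⟨φ, ?_, ?_⟩
  · rw [← Finite.injective_iff_bijective]
    intro g1 g2 hgg
    have h1 : f g1 = f g2 := hπ.1 (by rw [← hfφ, ← hfφ, hgg])
    have h2 : e (φK (k g1)) = e (φK (k g2)) := by
      have := hgg
      rw [hφ] at this
      simp only [h1] at this
      exact add_left_cancel this
    have h3 : k g1 = k g2 := hφK.1 (he h2)
    rw [hgdecomp g1, hgdecomp g2, h1, h3]
  · rw [← Finite.injective_iff_bijective]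
    intro g1 g2 hgg
    simp only at hgg
    have h1 : f g1 = f g2 := by
      have : (fun h => h + π h) (f g1) = (fun h => h + π h) (f g2) := by
        simp only [← hfφ, ← map_add, hgg]
      exact hσH.1 this
    have h2 : e (k g1 + φK (k g1)) = e (k g2 + φK (k g2)) := by
      have e1 : g1 + φ g1 = s (f g1) + s (π (f g1)) + e (k g1 + φK (k g1)) := by
        rw [map_add]
        nth_rewrite 1 [hgdecomp g1]
        rw [hφ]; abel
      have e2 : g2 + φ g2 = s (f g2) + s (π (f g2)) + e (k g2 + φK (k g2)) := by
        rw [map_add]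
        nth_rewrite 1 [hgdecomp g2]
        rw [hφ]; abel
      rw [e1, e2, h1] at hgg
      exact add_left_cancel hgg
    have h3 : k g1 = k g2 := hσK.1 (he h2)
    rw [hgdecomp g1, hgdecomp g2, h1, h3]



lemma hasCM_F1 (n m : ℕ) (hn : n = 2 * m) (hm : 0 < m) : HasCM (ZMod 2 × ZMod n) := by
  haveI : NeZero n := ⟨by omega⟩
  set hb : ZMod n → ZMod 2 := fun y => if y.val < m then 0 else 1 with hhb
  set c : ZMod 2 → ZMod n := fun t => (t.val : ZMod n) with hc
  have hzm2 : ∀ t : ZMod 2, t = 0 ∨ t = 1 := by decide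
  have hc0 : c 0 = 0 := by simp [hc]
  have hc1 : c 1 = 1 := by
    have h : (1 : ZMod 2).val = 1 := by decide
    simp only [hc, h, Nat.cast_one]
  have hvm : (m : ZMod n).val = m := ZMod.val_natCast_of_lt (by omega)
  -- y + m flips the high bit
  have hflip : ∀ y : ZMod n, hb (y + (m : ZMod n)) ≠ hb y := by
    intro y
    have hy : y.val < n := y.val_lt
    have hadd : (y + (m : ZMod n)).val = (y.val + m) % n := by
      rw [ZMod.val_add, hvm]
    simp only [hhb]
    rcases lt_or_ge y.val m with h | h
    · have hmod : (y.val + m) % n = y.val + m := Nat.mod_eq_of_lt (by omega)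
      rw [hadd, hmod]
      simp only [if_neg (by omega : ¬ y.val + m < m), if_pos h]
      exact one_ne_zero
    · have hmod : (y.val + m) % n = y.val - m := by
        have h1 : y.val + m - n < n := by omega
        have h2 : y.val + m = (y.val + m - n) + 1 * n := by omega
        rw [h2, Nat.add_mul_mod_self_right, Nat.mod_eq_of_lt h1]
        omega
      rw [hadd, hmod]
      simp only [if_pos (by omega : y.val - m < m), if_neg (by omega : ¬ y.val < m)]
      exact zero_ne_one
  -- solutions of 2z = 0
  have htwo : ∀ z : ZMod n, z + z = 0 → z = 0 ∨ z = (m : ZMod n) := by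
    intro z hz
    have hval : (z + z).val = 0 := by rw [hz, ZMod.val_zero]
    rw [ZMod.val_add] at hval
    have hzlt : z.val < n := z.val_lt
    have : z.val + z.val = 0 ∨ z.val + z.val = n := by
      rcases Nat.lt_or_ge (z.val + z.val) n with h | h
      · left; rwa [Nat.mod_eq_of_lt h] at hval
      · right
        have h2 : z.val + z.val - n < n := by omega
        have h3 : z.val + z.val = (z.val + z.val - n) + 1 * n := by omega
        rw [h3, Nat.add_mul_mod_self_right, Nat.mod_eq_of_lt h2] at hval
        omega
    rcases this with h | h
    · left; apply ZMod.val_injective; rw [ZMod.val_zero]; omega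
    · right; apply ZMod.val_injective; rw [hvm]; omega
  have hcinj : Injective c := by
    intro t1 t2 h
    have h1 : t1.val < 2 := t1.val_lt
    have h2 : t2.val < 2 := t2.val_lt
    have hv := congrArg ZMod.val h
    simp only [hc, ZMod.val_natCast] at hv
    rw [Nat.mod_eq_of_lt (by omega), Nat.mod_eq_of_lt (by omega)] at hv
    exact ZMod.val_injective _ hv
  -- parity: 2*y ≠ odd
  have hpar : ∀ y1 y2 : ZMod n, y1 + y1 = y2 + y2 + 1 → False := by
    intro y1 y2 h
    have h2n : (2 : ℕ) ∣ n := ⟨m, hn⟩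
    have h' := congrArg (ZMod.castHom h2n (ZMod 2)) h
    simp only [map_add, map_one] at h'
    have e1 : ∀ y : ZMod n, ZMod.castHom h2n (ZMod 2) y + ZMod.castHom h2n (ZMod 2) y = 0 := by
      intro y
      have h2 : (ZMod.castHom h2n (ZMod 2) y) + (ZMod.castHom h2n (ZMod 2) y)
          = 2 * (ZMod.castHom h2n (ZMod 2) y) := by ring
      rw [h2, show ((2 : ZMod 2)) = 0 from by decide, zero_mul]
    rw [e1, e1] at h'
    simp at h'
  set φ : ZMod 2 × ZMod n → ZMod 2 × ZMod n :=
    fun p => (p.1 + hb p.2, p.2 + c (p.1 + hb p.2)) with hφ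
  have h2e : ∀ t : ZMod 2, t + t = 0 := by decide
  refine ⟨φ, ?_, ?_⟩
  · rw [← Finite.injective_iff_bijective]
    rintro ⟨e1, y1⟩ ⟨e2, y2⟩ hp
    obtain ⟨ha, hbb⟩ := Prod.mk.injEq .. ▸ hp
    have hy : y1 = y2 := by
      rw [ha] at hbb
      exact add_right_cancel hbb
    rw [hy] at ha
    have he : e1 = e2 := add_right_cancel ha
    rw [he, hy]
  · rw [← Finite.injective_iff_bijective]
    rintro ⟨e1, y1⟩ ⟨e2, y2⟩ hp
    simp only [hφ, Prod.mk_add_mk, Prod.mk.injEq] at hp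
    obtain ⟨ha, hbb⟩ := hp
    have hA : hb y1 = hb y2 := by
      have r1 : e1 + (e1 + hb y1) = hb y1 := by rw [← add_assoc, h2e e1, zero_add]
      have r2 : e2 + (e2 + hb y2) = hb y2 := by rw [← add_assoc, h2e e2, zero_add]
      rw [← r1, ← r2]; exact ha
    by_cases hts : e1 + hb y1 = e2 + hb y2
    · have h2y : y1 + y1 = y2 + y2 := by
        rw [hts] at hbb
        rw [← add_assoc, ← add_assoc] at hbb
        exact add_right_cancel hbb
      have hz : (y1 - y2) + (y1 - y2) = 0 := by
        have h0 := sub_eq_zero_of_eq h2y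
        calc (y1 - y2) + (y1 - y2) = (y1 + y1) - (y2 + y2) := by abel
        _ = 0 := h0
      rcases htwo _ hz with h | h
      · have hy : y1 = y2 := by rwa [sub_eq_zero] at h
        rw [hy] at hA hts
        have he : e1 = e2 := by rw [hA] at hts; exact add_right_cancel hts
        rw [he, hy]
      · exfalso
        have hy : y1 = y2 + (m : ZMod n) := by
          rw [sub_eq_iff_eq_add] at h; rw [h]; ring
        rw [hy] at hA
        exact hflip y2 hA
    · exfalso
      have hcases : (c (e1 + hb y1) = 0 ∧ c (e2 + hb y2) = 1)
          ∨ (c (e1 + hb y1) = 1 ∧ c (e2 + hb y2) = 0) := by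
        rcases hzm2 (e1 + hb y1) with u | u <;> rcases hzm2 (e2 + hb y2) with v | v
        · exact absurd (u.trans v.symm) hts
        · left; rw [u, v, hc0, hc1]; exact ⟨rfl, rfl⟩
        · right; rw [u, v, hc0, hc1]; exact ⟨rfl, rfl⟩
        · exact absurd (u.trans v.symm) hts
      rcases hcases with ⟨u, v⟩ | ⟨u, v⟩
      · rw [u, v] at hbb
        refine hpar y1 y2 ?_
        rw [add_zero, ← add_assoc] at hbb
        exact hbb
      · rw [u, v] at hbb
        refine hpar y2 y1 ?_
        rw [add_zero, ← add_assoc] at hbb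
        exact hbb.symm




lemma hasCM_fin2 : HasCM (Fin 2 → ZMod 2) := by
  refine ⟨fun f => ![f 1, f 0 + f 1], ?_, ?_⟩ <;> decide

lemma hasCM_fin3 : HasCM (Fin 3 → ZMod 2) := by
  refine ⟨fun f => ![f 1, f 2, f 0 + f 1], ?_, ?_⟩ <;> decide

lemma hasCM_elem : ∀ (k : ℕ), k ≠ 1 → HasCM (Fin k → ZMod 2)
  | 0, _ => hasCM_of_subsingleton _
  | 2, _ => hasCM_fin2
  | 3, _ => hasCM_fin3
  | (k+4), _ => by
    have e1 : (Fin (k+4) → ZMod 2) ≃+ ((Fin 2 → ZMod 2) × (Fin (k+2) → ZMod 2)) := by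
      refine AddEquiv.mk' (((Equiv.arrowCongr (finCongr (by omega)) (Equiv.refl _)).trans
        ((Equiv.arrowCongr finSumFinEquiv.symm (Equiv.refl _)).trans
          (Equiv.sumArrowEquivProdArrow _ _ _))) ) ?_
      intro a b; rfl
    exact (HasCM.prod hasCM_fin2 (hasCM_elem (k+2) (by omega))).congr e1.symm



section coord

variable (b c : ℕ)

lemma pow2_cast_mod (hcb : c ≤ b) (t : ℕ) :
    (((t % 2^c) * 2^(b-c) : ℕ) : ZMod (2^b)) = ((t * 2^(b-c) : ℕ) : ZMod (2^b)) := by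
  have hpow : 2^c * 2^(b-c) = 2^b := by rw [← pow_add]; congr 1; omega
  conv_rhs => rw [← Nat.div_add_mod t (2^c)]
  have key : (2^c * (t / 2^c) + t % 2^c) * 2^(b-c)
      = (t / 2^c) * 2^b + (t % 2^c) * 2^(b-c) := by
    rw [add_mul, ← hpow]; ring
  have hz : ((t / 2^c * 2^b : ℕ) : ZMod (2^b)) = 0 := by
    rw [Nat.cast_mul, ZMod.natCast_self, mul_zero]
  rw [key, Nat.cast_add, hz, zero_add]

/-- The embedding of `ZMod (2^c)` into `ZMod (2^b)` as the subgroup of multiples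
of `2^(b-c)`. -/
def cmE (hcb : c ≤ b) : ZMod (2^c) →+ ZMod (2^b) :=
  AddMonoidHom.mk' (fun x => ((x.val * 2^(b-c) : ℕ) : ZMod (2^b)))
    (by
      intro x y
      haveI : NeZero (2^c) := ⟨by positivity⟩
      show (((x + y).val * 2^(b-c) : ℕ) : ZMod (2^b))
          = ((x.val * 2^(b-c) : ℕ) : ZMod (2^b)) + ((y.val * 2^(b-c) : ℕ) : ZMod (2^b))
      rw [ZMod.val_add, pow2_cast_mod b c hcb, add_mul, Nat.cast_add])

lemma cmE_apply (hcb : c ≤ b) (x : ZMod (2^c)) :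
    cmE b c hcb x = ((x.val * 2^(b-c) : ℕ) : ZMod (2^b)) := rfl

lemma cmE_injective (hcb : c ≤ b) : Injective (cmE b c hcb) := by
  haveI : NeZero (2^c) := ⟨by positivity⟩
  haveI : NeZero (2^b) := ⟨by positivity⟩
  have h0 : ∀ x : ZMod (2^c), cmE b c hcb x = 0 → x = 0 := by
    intro x hx
    have hdvd : (2^b : ℕ) ∣ x.val * 2^(b-c) := by
      rw [cmE_apply] at hx
      rwa [ZMod.natCast_eq_zero_iff] at hx
    have hpow : (2^c) * 2^(b-c) = 2^b := by rw [← pow_add]; congr 1; omega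
    rw [← hpow] at hdvd
    have h2 : (2^c : ℕ) ∣ x.val :=
      (Nat.mul_dvd_mul_iff_right (by positivity : 0 < 2^(b-c))).mp hdvd
    have : x.val = 0 := Nat.eq_zero_of_dvd_of_lt h2 x.val_lt
    apply ZMod.val_injective
    rw [this, ZMod.val_zero]
  intro x y hxy
  have : cmE b c hcb (x - y) = 0 := by rw [map_sub, hxy, sub_self]
  have := h0 _ this
  rwa [sub_eq_zero] at this

lemma cmE_fibers (hcb : c ≤ b) (g : ZMod (2^b)) :
    ZMod.castHom (pow_dvd_pow 2 (by omega : b - c ≤ b)) (ZMod (2^(b-c))) g = 0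
      ↔ ∃ x : ZMod (2^c), cmE b c hcb x = g := by
  haveI : NeZero (2^c) := ⟨by positivity⟩
  haveI : NeZero (2^b) := ⟨by positivity⟩
  haveI : NeZero (2^(b-c)) := ⟨by positivity⟩
  constructor
  · intro hg
    rw [ZMod.castHom_apply, ← ZMod.natCast_val,
      ZMod.natCast_eq_zero_iff] at hg
    obtain ⟨t, ht⟩ := hg
    refine ⟨(t : ZMod (2^c)), ?_⟩
    rw [cmE_apply]
    rw [ZMod.val_natCast, pow2_cast_mod b c hcb, mul_comm t (2^(b-c)), ← ht,
      ZMod.natCast_val, ZMod.cast_id]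
  · rintro ⟨x, rfl⟩
    rw [cmE_apply]
    rw [map_natCast, Nat.cast_mul, ZMod.natCast_self, mul_zero]

/-- The quotient map. -/
def cmQ (b c : ℕ) (hcb : c ≤ b) : ZMod (2^b) →+ ZMod (2^(b-c)) :=
  (ZMod.castHom (pow_dvd_pow 2 (Nat.sub_le b c)) (ZMod (2^(b-c)))).toAddMonoidHom

lemma cmQ_apply (b c : ℕ) (hcb : c ≤ b) (x : ZMod (2^b)) :
    cmQ b c hcb x = ZMod.castHom (pow_dvd_pow 2 (Nat.sub_le b c)) (ZMod (2^(b-c))) x := rfl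

lemma cmQ_surjective (b c : ℕ) (hcb : c ≤ b) : Surjective (cmQ b c hcb) := by
  intro y
  haveI : NeZero (2^(b-c)) := ⟨by positivity⟩
  refine ⟨((y.val : ℕ) : ZMod (2^b)), ?_⟩
  rw [cmQ_apply, map_natCast, ZMod.natCast_val, ZMod.cast_id]

lemma cmQ_fibers (b c : ℕ) (hcb : c ≤ b) (g : ZMod (2^b)) :
    cmQ b c hcb g = 0 ↔ ∃ x : ZMod (2^c), cmE b c hcb x = g :=
  cmE_fibers b c hcb g

lemma castHom_pow2_surjective (hcb : c ≤ b) :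
    Surjective (ZMod.castHom (pow_dvd_pow 2 hcb) (ZMod (2^c))) := by
  intro y
  haveI : NeZero (2^c) := ⟨by positivity⟩
  refine ⟨((y.val : ℕ) : ZMod (2^b)), ?_⟩
  rw [map_natCast, ZMod.natCast_val, ZMod.cast_id]

end coord



/-- Any product of `ZMod (2^c i)` with all `c i ≤ 1` is equivalent to a power of `ZMod 2`. -/
lemma elem_equiv {ι : Type} [Fintype ι] [DecidableEq ι] (c : ι → ℕ) (hc : ∀ i, c i ≤ 1) :
    Nonempty ((∀ i, ZMod (2^(c i))) ≃+
      (Fin ((univ.filter fun i => 0 < c i).card) → ZMod 2)) := by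
  classical
  set p : ι → Prop := fun i => 0 < c i with hp
  have e1 : (∀ i, ZMod (2^(c i))) ≃+
      ((∀ i : {i // p i}, ZMod (2^(c i.1))) × (∀ i : {i // ¬ p i}, ZMod (2^(c i.1)))) :=
    AddEquiv.mk' (Equiv.piEquivPiSubtypeProd p _) (fun x y => rfl)
  haveI hsub : ∀ i : {i // ¬ p i}, Subsingleton (ZMod (2^(c i.1))) := by
    intro i
    have h0 : c i.1 = 0 := by have := i.2; simp only [hp] at this; omega
    rw [h0, pow_zero]
    infer_instance
  haveI : Subsingleton (∀ i : {i // ¬ p i}, ZMod (2^(c i.1))) := inferInstance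
  haveI : Unique (∀ i : {i // ¬ p i}, ZMod (2^(c i.1))) := uniqueOfSubsingleton 0
  have e2 : ((∀ i : {i // p i}, ZMod (2^(c i.1))) × (∀ i : {i // ¬ p i}, ZMod (2^(c i.1))))
      ≃+ (∀ i : {i // p i}, ZMod (2^(c i.1))) :=
    AddEquiv.mk' (Equiv.prodUnique _ _) (fun x y => rfl)
  have e3 : (∀ i : {i // p i}, ZMod (2^(c i.1))) ≃+ ({i // p i} → ZMod 2) :=
    AddEquiv.piCongrRight (fun i => (ZMod.ringEquivCongr (by
      have h1 := hc i.1
      have h2 : 0 < c i.1 := i.2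
      have : c i.1 = 1 := by omega
      rw [this, pow_one])).toAddEquiv)
  have e4 : ({i // p i} → ZMod 2) ≃+
      (Fin ((univ.filter fun i => 0 < c i).card) → ZMod 2) := by
    refine AddEquiv.mk' (Equiv.arrowCongr ?_ (Equiv.refl _)) (fun x y => rfl)
    refine (Fintype.equivFin _).trans (finCongr ?_)
    rw [Fintype.card_subtype]
  exact ⟨((e1.trans e2).trans e3).trans e4⟩

lemma hasCM_elem_pi {ι : Type} [Fintype ι] [DecidableEq ι] (c : ι → ℕ) (hc : ∀ i, c i ≤ 1)
    (hcard : (univ.filter fun i => 0 < c i).card ≠ 1) : HasCM (∀ i, ZMod (2^(c i))) := by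
  obtain ⟨e⟩ := elem_equiv c hc
  exact (hasCM_elem _ hcard).congr e.symm

/-- Reduction step: quotient by an elementary subgroup given by exponents δ. -/
lemma hasCM_reduce {r : ℕ} (a δ : Fin r → ℕ) (hδa : ∀ i, δ i ≤ a i) (hδ1 : ∀ i, δ i ≤ 1)
    (hδcard : (univ.filter fun i => 0 < δ i).card ≠ 1)
    (hrec : HasCM (∀ i, ZMod (2 ^ (a i - δ i)))) : HasCM (∀ i, ZMod (2 ^ a i)) := by
  classical
  haveI instf : ∀ i, Finite (ZMod (2 ^ (a i))) := fun i => by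
    haveI : NeZero (2 ^ (a i)) := ⟨by positivity⟩
    infer_instance
  set f : (∀ i, ZMod (2 ^ a i)) →+ (∀ i, ZMod (2 ^ (a i - δ i))) :=
    AddMonoidHom.mk' (fun g i => cmQ (a i) (δ i) (hδa i) (g i))
      (by intro x y; funext i; simp [map_add]) with hf
  set e : (∀ i, ZMod (2 ^ δ i)) →+ (∀ i, ZMod (2 ^ a i)) :=
    AddMonoidHom.mk' (fun k i => cmE (a i) (δ i) (hδa i) (k i))
      (by intro x y; funext i; simp [map_add]) with he
  refine hasCM_extension f ?_ e ?_ ?_ hrec (hasCM_elem_pi δ hδ1 hδcard)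
  · intro y
    have hco : ∀ i, ∃ x, cmQ (a i) (δ i) (hδa i) x = y i :=
      fun i => cmQ_surjective (a i) (δ i) (hδa i) (y i)
    choose g hg using hco
    exact ⟨g, funext hg⟩
  · intro k1 k2 h
    funext i
    exact cmE_injective (a i) (δ i) (hδa i) (congrFun h i)
  · intro g
    constructor
    · intro hg
      have hgi : ∀ i, ∃ x : ZMod (2 ^ δ i), cmE (a i) (δ i) (hδa i) x = g i := by
        intro i
        rw [← cmQ_fibers (a i) (δ i) (hδa i) (g i)]
        exact congrFun hg i
      choose k hk using hgi
      exact ⟨k, funext hk⟩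
    · rintro ⟨k, rfl⟩
      funext i
      show cmQ (a i) (δ i) (hδa i) (cmE (a i) (δ i) (hδa i) (k i)) = 0
      rw [cmQ_fibers (a i) (δ i) (hδa i)]
      exact ⟨k i, rfl⟩

/-- Core lemma: a finite abelian 2-group which is not "cyclic nontrivial" has a complete
mapping. -/
lemma hasCM_core : ∀ (N r : ℕ) (a : Fin r → ℕ), (∑ i, a i) ≤ N →
    (univ.filter fun i => 0 < a i).card ≠ 1 → HasCM (∀ i, ZMod (2 ^ a i)) := by
  intro N
  induction N with
  | zero =>
    intro r a hsum hcard
    refine hasCM_elem_pi a (fun i => ?_) hcard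
    have : a i = 0 := by
      have h1 : a i ≤ ∑ j, a j := Finset.single_le_sum (fun j _ => Nat.zero_le _) (mem_univ i)
      omega
    omega
  | succ N ih =>
    intro r a hsum hcard
    by_cases hel : ∀ i, a i ≤ 1
    · exact hasCM_elem_pi a hel hcard
    · push_neg at hel
      obtain ⟨i0, hi0⟩ := hel
      have hi0' : 2 ≤ a i0 := hi0
      set T : Finset (Fin r) := univ.filter (fun i => 2 ≤ a i) with hT
      have hi0T : i0 ∈ T := by simp [hT, hi0']
      set P : Finset (Fin r) := univ.filter (fun i => 0 < a i) with hP
      have hi0P : i0 ∈ P := by simp [hP]; omega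
      have hPT : T ⊆ P := by
        intro i hi
        simp only [hT, mem_filter, mem_univ, true_and] at hi
        simp [hP]; omega
      by_cases hTc : T.card = 1
      · -- T = {i0}
        obtain ⟨x, hx⟩ := Finset.card_eq_one.mp hTc
        have hxT : x = i0 := by
          have := hi0T
          rw [hx, mem_singleton] at this
          exact this.symm
        rw [hxT] at hx
        have hTsub : ∀ i, i ≠ i0 → a i ≤ 1 := by
          intro i hne
          by_contra hcon
          have : i ∈ T := by simp [hT]; omega
          rw [hx, mem_singleton] at this
          exact hne this
        have hP2 : 2 ≤ P.card := by
          have h1 : 0 < P.card := Finset.card_pos.mpr ⟨i0, hi0P⟩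
          omega
        obtain ⟨j0, hj0P, hj0ne⟩ := Finset.exists_mem_ne (s := P) (by omega) i0
        have haj0 : a j0 = 1 := by
          have h1 : 0 < a j0 := by
            have := hj0P; simp only [hP, mem_filter, mem_univ, true_and] at this; exact this
          have h2 := hTsub j0 hj0ne
          omega
        by_cases hP3 : P.card = 2
        · -- base case: ZMod 2 × ZMod (2^(a i0))
          have hPeq : P = {i0, j0} := by
            apply Finset.eq_of_subset_of_card_le
            · intro i hi
              by_contra hnotin
              have hsub : insert i {i0, j0} ⊆ P := by
                intro x hx
                rw [mem_insert, mem_insert, mem_singleton] at hx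
                rcases hx with h | h | h <;> subst h
                · exact hi
                · exact hi0P
                · exact hj0P
              have hc3 : (insert i ({i0, j0} : Finset (Fin r))).card = 3 := by
                rw [Finset.card_insert_of_notMem hnotin,
                  Finset.card_insert_of_notMem (by simpa using hj0ne.symm),
                  Finset.card_singleton]
              have := Finset.card_le_card hsub
              omega
            · rw [Finset.card_insert_of_notMem (by simpa using hj0ne.symm),
                Finset.card_singleton, hP3]
          have e1 : (∀ i, ZMod (2 ^ a i)) ≃+
              (ZMod (2 ^ a i0) × (∀ j : {j // j ≠ i0}, ZMod (2 ^ a j.1))) :=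
            AddEquiv.mk' (Equiv.piSplitAt i0 _) (fun x y => rfl)
          obtain ⟨e2⟩ := elem_equiv (fun j : {j // j ≠ i0} => a j.1) (fun j => hTsub j.1 j.2)
          have hk : (univ.filter fun j : {j // j ≠ i0} => 0 < a j.1).card = 1 := by
            rw [Finset.card_eq_one]
            refine ⟨⟨j0, hj0ne⟩, ?_⟩
            ext ⟨j, hjne⟩
            simp only [mem_filter, mem_univ, true_and, mem_singleton]
            constructor
            · intro hpos
              have hjP : j ∈ P := by simp [hP]; omega
              rw [hPeq, mem_insert, mem_singleton] at hjP
              rcases hjP with h | h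
              · exact absurd h hjne
              · exact Subtype.ext h
            · intro h
              have : j = j0 := by simpa using congrArg Subtype.val h
              rw [this, haj0]; omega
          have e2' : (∀ j : {j // j ≠ i0}, ZMod (2 ^ a j.1)) ≃+ (Fin 1 → ZMod 2) :=
            e2.trans (AddEquiv.mk' (Equiv.arrowCongr (finCongr hk) (Equiv.refl _))
              (fun x y => rfl))
          have e3 : (Fin 1 → ZMod 2) ≃+ ZMod 2 :=
            AddEquiv.mk' (Equiv.funUnique _ _) (fun x y => rfl)
          have E : (∀ i, ZMod (2 ^ a i)) ≃+ (ZMod 2 × ZMod (2 ^ a i0)) :=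
            (e1.trans (AddEquiv.prodCongr (AddEquiv.refl _) (e2'.trans e3))).trans
              AddEquiv.prodComm
          have hF1 : HasCM (ZMod 2 × ZMod (2 ^ a i0)) := by
            refine hasCM_F1 (2 ^ a i0) (2 ^ (a i0 - 1)) ?_ (by positivity)
            conv_lhs => rw [show a i0 = (a i0 - 1) + 1 by omega]
            rw [pow_succ]; ring
          exact hF1.congr E.symm
        · -- P.card ≥ 3: reduce at i0 and j0
          set δ : Fin r → ℕ := fun i => if i = i0 ∨ i = j0 then 1 else 0 with hδ
          have hδa : ∀ i, δ i ≤ a i := by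
            intro i
            simp only [hδ]
            split
            · rename_i hsplit
              rcases hsplit with h | h <;> subst h <;> omega
            · omega
          have hδ1 : ∀ i, δ i ≤ 1 := by intro i; simp only [hδ]; split <;> omega
          have hfilt : (univ.filter fun i => 0 < δ i) = {i0, j0} := by
            ext i
            simp only [mem_filter, mem_univ, true_and, hδ, mem_insert, mem_singleton]
            split
            · rename_i hs; simpa using hs
            · rename_i hs; simpa using hs
          have hδcard : (univ.filter fun i => 0 < δ i).card ≠ 1 := by
            rw [hfilt, Finset.card_insert_of_notMem (by simpa using hj0ne.symm),
              Finset.card_singleton]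
            omega
          refine hasCM_reduce a δ hδa hδ1 hδcard ?_
          refine ih r _ ?_ ?_
          · -- sum bound
            have hsplit : ∀ i, (a i - δ i) + δ i = a i := fun i => by
              have := hδa i; omega
            have hsum2 : (∑ i, (a i - δ i)) + (∑ i, δ i) = ∑ i, a i := by
              rw [← Finset.sum_add_distrib]
              exact Finset.sum_congr rfl (fun i _ => hsplit i)
            have hδsum : 1 ≤ ∑ i, δ i :=
              le_trans (by simp [hδ]) (Finset.single_le_sum (f := δ)
                (fun j _ => Nat.zero_le _) (mem_univ i0))
            omega
          · -- positivity count still ≥ 2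
            have hsubset : P.erase j0 ⊆ (univ.filter fun i => 0 < a i - δ i) := by
              intro i hi
              rw [mem_erase] at hi
              obtain ⟨hne, hiP⟩ := hi
              simp only [hP, mem_filter, mem_univ, true_and] at hiP
              simp only [mem_filter, mem_univ, true_and, hδ]
              by_cases hii : i = i0
              · subst hii; simp; omega
              · simp [hii, hne]; omega
            have hcard2 : 2 ≤ (P.erase j0).card := by
              rw [Finset.card_erase_of_mem hj0P]
              omega
            have := Finset.card_le_card hsubset
            omega
      · -- T.card ≠ 1 : reduce on all of T
        set δ : Fin r → ℕ := fun i => if i ∈ T then 1 else 0 with hδ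
        have hδa : ∀ i, δ i ≤ a i := by
          intro i
          simp only [hδ]
          split
          · rename_i hs; simp only [hT, mem_filter, mem_univ, true_and] at hs; omega
          · omega
        have hδ1 : ∀ i, δ i ≤ 1 := by intro i; simp only [hδ]; split <;> omega
        have hfilt : (univ.filter fun i => 0 < δ i) = T := by
          ext i
          simp only [mem_filter, mem_univ, true_and, hδ]
          split
          · rename_i hs; simpa using hs
          · rename_i hs; simpa using hs
        refine hasCM_reduce a δ hδa hδ1 (by rw [hfilt]; exact hTc) ?_
        refine ih r _ ?_ ?_
        · have hsplit : ∀ i, (a i - δ i) + δ i = a i := fun i => by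
            have := hδa i; omega
          have hsum2 : (∑ i, (a i - δ i)) + (∑ i, δ i) = ∑ i, a i := by
            rw [← Finset.sum_add_distrib]
            exact Finset.sum_congr rfl (fun i _ => hsplit i)
          have hδsum : 1 ≤ ∑ i, δ i :=
            le_trans (by simp [hδ, hi0T]) (Finset.single_le_sum (f := δ)
              (fun j _ => Nat.zero_le _) (mem_univ i0))
          omega
        · have hfilt2 : (univ.filter fun i => 0 < a i - δ i) = P := by
            ext i
            simp only [mem_filter, mem_univ, true_and, hδ, hP]
            by_cases hiT : i ∈ T
            · simp only [if_pos hiT]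
              have : 2 ≤ a i := by
                have := hiT; simp only [hT, mem_filter, mem_univ, true_and] at this
                exact this
              omega
            · simp only [if_neg hiT]; omega
          rw [hfilt2]
          exact hcard



/-- number of solutions of `g + g = 0`. -/
noncomputable def invS (G : Type*) [AddCommGroup G] : ℕ :=
  Nat.card {g : G // g + g = 0}

lemma invS_congr {G H : Type*} [AddCommGroup G] [AddCommGroup H] (e : G ≃+ H) :
    invS G = invS H := by
  refine Nat.card_congr (e.toEquiv.subtypeEquiv fun g => ?_)
  show g + g = 0 ↔ e g + e g = 0
  rw [← map_add]
  exact (EmbeddingLike.map_eq_zero_iff (f := e)).symm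

lemma invS_prod (G H : Type*) [AddCommGroup G] [AddCommGroup H] :
    invS (G × H) = invS G * invS H := by
  rw [invS, invS, invS, ← Nat.card_prod]
  refine Nat.card_congr ?_
  refine Equiv.trans (Equiv.subtypeEquiv (Equiv.refl _) (q := fun p => p.1 + p.1 = 0 ∧ p.2 + p.2 = 0)
    (fun p => by simp [Prod.ext_iff])) ?_
  exact ⟨fun s => (⟨s.1.1, s.2.1⟩, ⟨s.1.2, s.2.2⟩),
    fun t => ⟨(t.1.1, t.2.1), ⟨t.1.2, t.2.2⟩⟩, fun s => rfl, fun t => rfl⟩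

lemma invS_pi {ι : Type} [Fintype ι] (G : ι → Type*) [∀ i, AddCommGroup (G i)] :
    invS (∀ i, G i) = ∏ i, invS (G i) := by
  rw [invS]
  rw [show {g : ∀ i, G i // g + g = 0} = {g : ∀ i, G i // ∀ i, g i + g i = 0} from by
    congr 1; funext g; simp [funext_iff]]
  rw [Nat.card_congr (Equiv.subtypePiEquivPi (p := fun i (x : G i) => x + x = 0))]
  rw [Nat.card_pi]
  rfl

lemma invS_zmod_odd (q : ℕ) (h0 : q ≠ 0) (hq : ¬ 2 ∣ q) : invS (ZMod q) = 1 := by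
  haveI : NeZero q := ⟨h0⟩
  rw [invS, Nat.card_eq_one_iff_unique]
  constructor
  · constructor
    rintro ⟨x, hx⟩ ⟨y, hy⟩
    have hsol : ∀ z : ZMod q, z + z = 0 → z = 0 := by
      intro z hz
      have hc : (Nat.card (ZMod q)).Coprime 2 := by
        rw [Nat.card_zmod, Nat.coprime_two_right, Nat.odd_iff, ← Nat.two_dvd_ne_zero]
        exact hq
      have hinj := hc.nsmul_right_bijective (G := ZMod q) |>.1
      have : (2 : ℕ) • z = (2 : ℕ) • (0 : ZMod q) := by
        rw [two_nsmul, smul_zero, hz]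
      exact hinj this
    simp only [Subtype.ext_iff, hsol x hx, hsol y hy]
  · exact ⟨⟨0, by simp⟩⟩

lemma invS_zmod_two_pow (a : ℕ) (ha : 1 ≤ a) : invS (ZMod (2^a)) = 2 := by
  haveI : NeZero (2^a) := ⟨by positivity⟩
  have hsol : ∀ z : ZMod (2^a), z + z = 0 ↔ (z = 0 ∨ z = ((2^(a-1) : ℕ) : ZMod (2^a))) := by
    intro z
    constructor
    · intro hz
      have hval : (z + z).val = 0 := by rw [hz, ZMod.val_zero]
      rw [ZMod.val_add] at hval
      have hlt : z.val < 2^a := z.val_lt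
      have hhalf : 2^(a-1) + 2^(a-1) = 2^a := by
        have h1 : 2^(a-1) * 2 = 2^a := by rw [← pow_succ, Nat.sub_add_cancel ha]
        omega
      obtain ⟨k, hk⟩ := Nat.dvd_of_mod_eq_zero hval
      have hklt : k < 2 := by
        by_contra hcon
        push_neg at hcon
        have hmul := Nat.mul_le_mul_left (2^a) hcon
        omega
      have : z.val = 0 ∨ z.val = 2^(a-1) := by
        interval_cases k <;> omega
      rcases this with h | h
      · left; apply ZMod.val_injective; rw [h, ZMod.val_zero]
      · right; apply ZMod.val_injective
        rw [h, ZMod.val_natCast, Nat.mod_eq_of_lt (by omega)]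
    · rintro (rfl | rfl)
      · simp
      · rw [← Nat.cast_add]
        have hhalf : 2^(a-1) + 2^(a-1) = 2^a := by
          have h1 : 2^(a-1) * 2 = 2^a := by rw [← pow_succ, Nat.sub_add_cancel ha]
          omega
        rw [hhalf, ZMod.natCast_self]
  have hne : ((2^(a-1) : ℕ) : ZMod (2^a)) ≠ 0 := by
    rw [Ne, ZMod.natCast_eq_zero_iff]
    intro hdvd
    have := Nat.le_of_dvd (by positivity) hdvd
    have h2 : (2:ℕ)^(a-1) < 2^a := Nat.pow_lt_pow_right (by norm_num) (by omega)
    omega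
  have he : {z : ZMod (2^a) // z + z = 0} ≃ ZMod 2 := by
    refine ⟨fun s => if s.1 = 0 then 0 else 1,
      fun t => if t = 0 then ⟨0, by simp⟩ else ⟨((2^(a-1) : ℕ) : ZMod (2^a)), (hsol _).mpr (Or.inr rfl)⟩,
      ?_, ?_⟩
    · rintro ⟨z, hz⟩
      rcases (hsol z).mp hz with rfl | rfl
      · simp
      · simp only [if_neg hne]
        rw [if_neg (by norm_num : (1 : ZMod 2) ≠ 0)]
    · intro t
      rcases (by decide : ∀ t : ZMod 2, t = 0 ∨ t = 1) t with rfl | rfl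
      · simp
      · simp only [if_neg (by decide : ¬ (1 : ZMod 2) = 0)]
        rw [if_neg hne]
  rw [invS, Nat.card_congr he, Nat.card_zmod]



theorem stmt_4 (Γ : Type*) [AddCommGroup Γ] [Fintype Γ] [DecidableEq Γ]
    (h : (Finset.univ.filter (fun g : Γ => g ≠ 0 ∧ 2 • g = 0)).card ≠ 1) :
    ∃ φ ψ : Γ ≃ Γ, (∀ g : Γ, g + φ g + ψ g = 0) ∧ φ 0 = 0 ∧ ψ 0 = 0 := by
  classical
  -- Step 1: reformulate the hypothesis as `invS Γ ≠ 2`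
  have hinv : invS Γ ≠ 2 := by
    have hins : (univ.filter (fun g : Γ => g + g = 0))
        = insert 0 (univ.filter (fun g : Γ => g ≠ 0 ∧ 2 • g = 0)) := by
      ext g
      simp only [mem_filter, mem_univ, true_and, mem_insert, two_nsmul]
      constructor
      · intro hg
        by_cases h0 : g = 0
        · exact Or.inl h0
        · exact Or.inr ⟨h0, hg⟩
      · rintro (rfl | ⟨-, hg⟩)
        · simp
        · exact hg
    have hrel : invS Γ = (univ.filter (fun g : Γ => g ≠ 0 ∧ 2 • g = 0)).card + 1 := by
      rw [invS, Nat.card_eq_fintype_card, Fintype.card_subtype, hins,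
        Finset.card_insert_of_notMem (by simp)]
    omega
  -- Step 2: Γ has a complete mapping
  have hCM : HasCM Γ := by
    obtain ⟨ι, hι, p, hp, n, ⟨eΓ⟩⟩ := AddCommGroup.equiv_directSum_zmod_of_finite Γ
    have e2 : Γ ≃+ ∀ i, ZMod (p i ^ n i) := eΓ.trans (DirectSum.addEquivProd _)
    haveI hNZ : ∀ i, NeZero (p i ^ n i) := fun i => ⟨pow_ne_zero _ (hp i).pos.ne'⟩
    set q : ι → Prop := fun i => 2 ∣ p i ^ n i with hqdef
    have heven : ∀ i : ι, q i → p i = 2 ∧ 1 ≤ n i := by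
      intro i hqi
      have h2 : (2 : ℕ) ∣ p i ^ n i := hqi
      have hdvd2 : (2 : ℕ) ∣ p i := Nat.Prime.dvd_of_dvd_pow Nat.prime_two h2
      have hp2 : p i = 2 := ((Nat.prime_dvd_prime_iff_eq Nat.prime_two (hp i)).mp hdvd2).symm
      refine ⟨hp2, ?_⟩
      by_contra hn
      push_neg at hn
      have hni : n i = 0 := by omega
      rw [hni, pow_zero] at h2
      omega
    have e3 : (∀ i, ZMod (p i ^ n i)) ≃+
        ((∀ i : {i // q i}, ZMod (p i.1 ^ n i.1)) × (∀ i : {i // ¬ q i}, ZMod (p i.1 ^ n i.1))) :=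
      AddEquiv.mk' (Equiv.piEquivPiSubtypeProd q _) fun x y => rfl
    -- the odd part
    have hoddCM : HasCM (∀ i : {i // ¬ q i}, ZMod (p i.1 ^ n i.1)) := by
      apply hasCM_of_odd
      rw [Fintype.card_pi]
      intro hdvd
      have h2 : Prime (2 : ℕ) := Nat.prime_iff.mp Nat.prime_two
      rw [h2.dvd_finset_prod_iff] at hdvd
      obtain ⟨i, -, hi⟩ := hdvd
      rw [ZMod.card] at hi
      exact i.2 hi
    -- the even part
    have e4 : (∀ i : {i // q i}, ZMod (p i.1 ^ n i.1)) ≃+ (∀ i : {i // q i}, ZMod (2 ^ n i.1)) :=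
      AddEquiv.piCongrRight fun i =>
        (ZMod.ringEquivCongr (by rw [(heven i.1 i.2).1])).toAddEquiv
    set a : Fin (Fintype.card {i // q i}) → ℕ :=
      fun j => n ((Fintype.equivFin {i // q i}).symm j).1 with ha
    have e5 : (∀ i : {i // q i}, ZMod (2 ^ n i.1)) ≃+
        (∀ j : Fin (Fintype.card {i // q i}), ZMod (2 ^ a j)) :=
      AddEquiv.mk' (Equiv.piCongrLeft' (fun i : {i // q i} => ZMod (2 ^ n i.1))
        (Fintype.equivFin {i // q i})) fun x y => rfl
    -- compute `invS Γ`
    have hinv2 : invS Γ = 2 ^ Fintype.card {i // q i} := by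
      rw [invS_congr e2, invS_pi]
      have hsplit : ∀ i : ι, invS (ZMod (p i ^ n i)) = if q i then 2 else 1 := by
        intro i
        by_cases hqi : q i
        · rw [if_pos hqi]
          obtain ⟨hp2, hn1⟩ := heven i hqi
          rw [invS_congr (ZMod.ringEquivCongr (by rw [hp2]) :
            ZMod (p i ^ n i) ≃+* ZMod (2 ^ n i)).toAddEquiv]
          exact invS_zmod_two_pow _ hn1
        · rw [if_neg hqi]
          exact invS_zmod_odd _ (hNZ i).1 hqi
      rw [Finset.prod_congr rfl (fun i _ => hsplit i), Finset.prod_ite,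
        Finset.prod_const, Finset.prod_const, one_pow, mul_one, Fintype.card_subtype]
    have hEcard : Fintype.card {i // q i} ≠ 1 := by
      intro hcon
      rw [hcon, pow_one] at hinv2
      exact hinv hinv2
    have hevenCM : HasCM (∀ j : Fin (Fintype.card {i // q i}), ZMod (2 ^ a j)) := by
      refine hasCM_core (∑ j, a j) _ a le_rfl ?_
      have hall : (univ.filter fun j => 0 < a j) = univ := by
        refine Finset.filter_true_of_mem fun j _ => ?_
        have := (heven _ ((Fintype.equivFin {i // q i}).symm j).2).2
        simp only [ha]
        omega
      rw [hall, card_univ, Fintype.card_fin]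
      exact hEcard
    exact ((((hevenCM.congr (e4.trans e5).symm).prod hoddCM).congr e3.symm).congr e2.symm)
  -- Step 3: normalize
  obtain ⟨φ0, hφ0, hσ0⟩ := hCM
  set c := φ0 0 with hc
  set φf : Γ → Γ := fun g => φ0 g - c with hφf
  have hbij1 : Bijective φf := ((Equiv.subRight c).bijective).comp hφ0
  have hσf : (fun g : Γ => g + φf g) = (fun x => x - c) ∘ (fun g : Γ => g + φ0 g) := by
    funext g
    simp only [hφf, comp_apply]
    abel
  have hbij2 : Bijective (fun g : Γ => g + φf g) := by
    rw [hσf]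
    exact ((Equiv.subRight c).bijective).comp hσ0
  set ψf : Γ → Γ := fun g => -(g + φf g) with hψf
  have hbij3 : Bijective ψf := ((Equiv.neg Γ).bijective).comp hbij2
  refine ⟨Equiv.ofBijective φf hbij1, Equiv.ofBijective ψf hbij3, ?_, ?_, ?_⟩
  · intro g
    show g + φf g + ψf g = 0
    simp only [hψf]
    abel
  · show φf 0 = 0
    simp [hφf, hc]
  · show ψf 0 = 0
    simp [hψf, hφf, hc]
end

section
/- Let Γ be a finite Abelian group and let G be a finite digraph with no isolated vertices. Then there exists an arc labeling ψ : A(G) → Γ making the induced vertex map x ↦ Σ_{(y,x) ∈ A} ψ(y,x) − Σ_{(x,y) ∈ A} ψ(x,y) injective if and only if there exists an injective map φ : V(G) → Γ such that for every weakly connected component C of G, the sum Σ_{x ∈ V(C)} φ(x) = 0. -/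
open scoped Classical in
lemma flow_aux {V : Type*} [Fintype V] {Γ : Type*} [AddCommGroup Γ]
    (R : V → V → Prop) {r x : V}
    (h : Relation.ReflTransGen (fun a b => R a b ∨ R b a) r x) (v : Γ) :
    ∃ f : V → V → Γ, (∀ a b, ¬ R a b → f a b = 0) ∧
      ∀ z : V, ((∑ y, f y z) - (∑ y, f z y)) =
        (if z = x then v else 0) - (if z = r then v else 0) := by
  induction h with
  | refl => exact ⟨0, fun _ _ _ => rfl, fun z => by simp⟩
  | @tail b c hab hbc ih =>
    obtain ⟨f, hf0, hfd⟩ := ih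
    rcases hbc with hbc | hcb
    · refine ⟨f + fun a b' => if a = b then if b' = c then v else 0 else 0,
        fun a b' hnab => ?_, fun z => ?_⟩
      · simp only [Pi.add_apply, hf0 a b' hnab]
        by_cases h1 : a = b <;> by_cases h2 : b' = c <;> simp_all
      · simp only [Pi.add_apply, Finset.sum_add_distrib]
        rw [show (∑ y, if y = b then if z = c then v else 0 else 0)
              = (if z = c then v else 0) by simp,
            show (∑ y, if z = b then if y = c then v else 0 else 0)
              = (if z = b then v else 0) by by_cases h : z = b <;> simp [h]]
        rw [← sub_add_sub_comm, hfd z]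
        abel
    · refine ⟨f + fun a b' => if a = c then if b' = b then -v else 0 else 0,
        fun a b' hnab => ?_, fun z => ?_⟩
      · simp only [Pi.add_apply, hf0 a b' hnab]
        by_cases h1 : a = c <;> by_cases h2 : b' = b <;> simp_all
      · simp only [Pi.add_apply, Finset.sum_add_distrib]
        rw [show (∑ y, if y = c then if z = b then -v else 0 else 0)
              = (if z = b then -v else 0) by simp,
            show (∑ y, if z = c then if y = b then -v else 0 else 0)
              = (if z = c then -v else 0) by by_cases h : z = c <;> simp [h]]
        rw [← sub_add_sub_comm, hfd z,
          show (if z = b then -v else 0) = -(if z = b then v else 0) by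
            split_ifs <;> simp,
          show (if z = c then -v else 0) = -(if z = c then v else 0) by
            split_ifs <;> simp]
        abel

open scoped Classical in
theorem stmt_17 (V : Type*) [Fintype V] (Γ : Type*) [AddCommGroup Γ] [Fintype Γ]
    (R : V → V → Prop) (hnoiso : ∀ v : V, ∃ u : V, R v u ∨ R u v) :
    (∃ ψ : V → V → Γ, Function.Injective (fun x : V =>
        (∑ y ∈ Finset.univ.filter (fun y => R y x), ψ y x) -
        (∑ y ∈ Finset.univ.filter (fun y => R x y), ψ x y))) ↔
    (∃ φ : V → Γ, Function.Injective φ ∧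
      ∀ x : V,
        ∑ y ∈ Finset.univ.filter
            (fun y => Relation.ReflTransGen (fun a b => R a b ∨ R b a) x y), φ y = 0) := by
  set S : V → V → Prop := fun a b => R a b ∨ R b a with hS
  have hSsymm : Symmetric S := fun a b h => h.symm
  have hEsymm : Symmetric (Relation.ReflTransGen S) :=
    fun a b h => (@Relation.ReflTransGen.stdSymm _ S ⟨fun _ _ h => hSsymm h⟩).symm a b h
  have hRE : ∀ {a b}, R a b → Relation.ReflTransGen S a b := fun h =>
    Relation.ReflTransGen.single (Or.inl h)
  constructor
  · rintro ⟨ψ, hψ⟩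
    refine ⟨_, hψ, fun x => ?_⟩
    rw [Finset.sum_sub_distrib, sub_eq_zero]
    have key : ∀ (g : V → V → Γ) (p : V → V → Prop),
        (∑ y ∈ Finset.univ.filter (fun y => Relation.ReflTransGen S x y),
          ∑ z ∈ Finset.univ.filter (fun z => p z y), g z y)
        = ∑ y, ∑ z, if Relation.ReflTransGen S x y ∧ p z y then g z y else 0 := by
      intro g p
      rw [Finset.sum_filter]
      refine Finset.sum_congr rfl fun y _ => ?_
      by_cases h : Relation.ReflTransGen S x y <;> simp [h, Finset.sum_filter]
    rw [key ψ (fun z y => R z y), key (fun z y => ψ y z) (fun z y => R y z)]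
    rw [Finset.sum_comm]
    refine Finset.sum_congr rfl fun a _ => Finset.sum_congr rfl fun b _ => ?_
    refine if_congr ⟨fun ⟨h1, h2⟩ => ⟨h1.trans (hEsymm (hRE h2)), h2⟩,
      fun ⟨h1, h2⟩ => ⟨h1.trans (hRE h2), h2⟩⟩ rfl rfl
  · rintro ⟨φ, hφinj, hφ⟩
    set Sd : Setoid V := ⟨Relation.ReflTransGen S, ⟨fun _ => Relation.ReflTransGen.refl,
      fun h => hEsymm h, fun h1 h2 => Relation.ReflTransGen.trans h1 h2⟩⟩ with hSd
    set rt : V → V := fun x => (@Quotient.mk _ Sd x).out with hrt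
    have hrtE : ∀ y, Relation.ReflTransGen S (rt y) y := fun y =>
      Quotient.mk_out (s := Sd) y
    have hrteq : ∀ {a b}, Relation.ReflTransGen S a b → rt a = rt b := fun h => by
      simp only [hrt]
      congr 1
      exact Quotient.sound h
    have hex : ∀ x : V, ∃ f : V → V → Γ, (∀ a b, ¬ R a b → f a b = 0) ∧
        ∀ z : V, ((∑ y, f y z) - (∑ y, f z y)) =
          (if z = x then φ x else 0) - (if z = rt x then φ x else 0) :=
      fun x => flow_aux R (hrtE x) (φ x)
    choose f hf0 hfd using hex
    refine ⟨fun a b => ∑ x, f x a b, ?_⟩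
    have hval : (fun z : V =>
        (∑ y ∈ Finset.univ.filter (fun y => R y z), ∑ x, f x y z) -
        (∑ y ∈ Finset.univ.filter (fun y => R z y), ∑ x, f x z y)) = φ := by
      funext z
      rw [Finset.sum_filter_of_ne (fun y _ h => by
            by_contra hn
            exact h (Finset.sum_eq_zero fun x _ => hf0 x y z hn)),
          Finset.sum_filter_of_ne (fun y _ h => by
            by_contra hn
            exact h (Finset.sum_eq_zero fun x _ => hf0 x z y hn))]
      have hc1 : (∑ y : V, ∑ x : V, f x y z) = ∑ x : V, ∑ y : V, f x y z :=
        Finset.sum_comm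
      have hc2 : (∑ y : V, ∑ x : V, f x z y) = ∑ x : V, ∑ y : V, f x z y :=
        Finset.sum_comm
      rw [hc1, hc2, ← Finset.sum_sub_distrib]
      rw [Finset.sum_congr rfl fun x _ => hfd x z, Finset.sum_sub_distrib]
      have h1 : (∑ x, if z = x then φ x else 0) = φ z := by simp
      have h2 : (∑ x, if z = rt x then φ x else 0) = 0 := by
        by_cases hz : z = rt z
        · have hset : ∀ x, (z = rt x) ↔ Relation.ReflTransGen S z x := by
            intro x
            constructor
            · intro h; rw [h]; exact hrtE x
            · intro h; rw [hz, hrteq h]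
          rw [Finset.sum_congr rfl fun x _ => by rw [if_congr (hset x) rfl rfl]]
          rw [← Finset.sum_filter]
          exact hφ z
        · refine Finset.sum_eq_zero fun x _ => ?_
          rw [if_neg]
          intro h
          have hEzx : Relation.ReflTransGen S z x := by rw [h]; exact hrtE x
          exact hz (h.trans (hrteq hEzx).symm)
      rw [h1, h2, sub_zero]
    rw [hval]
    exact hφinj
end
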